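/- arXiv:2501.15701 — 2 statements merged into one kernel-verified Lean document; each statement's English description precedes it below -/
import Mathlib

section
/- Let $\alpha \in (0,1)$ and define $\mathcal{L}$, $\Delta_u$, $\Delta_\tau$ as in the $\tau$-$u$ system with parameter $\alpha$. If $u_g(\tau) = 1 - \frac{2}{3}(\alpha-4)\tau + \frac{5}{3}\tau^2$, then $\mathcal{L}[u_g](\tau) > 0$ for all $\tau \in (-(1-\alpha)/2, 0)$. -/
/-! On `(-(1 - α)/2, 0)` the sign of `𝓛[u_g]` is read off the factorization
`𝓛[u_g](τ) = -(4/3) τ (τ + 1 - α) (2τ + 1 - α) (5τ + 4 - α)`: the first factor is positive since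
`τ < 0`, and the other three are positive since `τ > -(1 - α)/2` and `0 < α < 1`. -/

noncomputable def DeltaU (α τ u : ℝ) : ℝ :=
  -2 * u ^ 2 + 2 * u - 4 / 3 * (α - 4) * τ * u + 10 / 3 * τ ^ 2 * u

noncomputable def DeltaTau (α τ u : ℝ) : ℝ :=
  3 * (α - τ) * u - 3 * α - (4 * α - 1) * τ - (α - 2) * τ ^ 2 + τ ^ 3

noncomputable def Lop (α : ℝ) (u : ℝ → ℝ) (τ : ℝ) : ℝ :=
  DeltaTau α τ (u τ) * deriv u τ - DeltaU α τ (u τ)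

theorem deriv_quadratic (a b c τ : ℝ) :
    deriv (fun t => a - b * t + c * t ^ 2) τ = -b + 2 * c * τ := by
  have h : HasDerivAt (fun t : ℝ => a - b * t + c * t ^ 2) (-b + 2 * c * τ) τ := by
    have := (((hasDerivAt_id τ).const_mul b).const_sub a).add ((hasDerivAt_pow 2 τ).const_mul c)
    exact this.congr_deriv (by simp only [Nat.cast_ofNat]; ring)
  exact h.deriv

theorem Lop_ug_eq_mul (α τ : ℝ) :
    Lop α (fun t => 1 - 2 / 3 * (α - 4) * t + 5 / 3 * t ^ 2) τ
      = -(4 / 3) * τ * (τ + 1 - α) * (2 * τ + 1 - α) * (5 * τ + 4 - α) := by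
  rw [Lop, deriv_quadratic, DeltaTau, DeltaU]
  ring

theorem stmt_10 (α : ℝ) (hα : α ∈ Set.Ioo (0 : ℝ) 1) :
    ∀ τ ∈ Set.Ioo (-(1 - α) / 2) (0 : ℝ),
      Lop α (fun t => 1 - 2 / 3 * (α - 4) * t + 5 / 3 * t ^ 2) τ > 0 := by
  obtain ⟨hα0, hα1⟩ := hα
  rintro τ ⟨hτ_lower, hτ_neg⟩
  rw [Lop_ug_eq_mul]
  have h0 : 0 < -(4 / 3) * τ := by linarith
  have h1 : 0 < τ + 1 - α := by linarith
  have h2 : 0 < 2 * τ + 1 - α := by linarith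
  have h3 : 0 < 5 * τ + 4 - α := by linarith
  exact mul_pos (mul_pos (mul_pos h0 h1) h2) h3
end

section
/- Let $d = \ell = 3$, $1 < r < 3-\sqrt{3}$, and $w_\pm = \frac{r \pm \sqrt{r^2-6r+6}}{2}$. Suppose $0 < w < w_- $ and $0 < \sigma < 1-w_-$. Then $3(1-w)\big((1-w)^2 - \sigma^2\big) - 2\sigma(w_- - w)(w_+ - w) > 2(1-w)(w_- - w)(2 - w_- - w_+) > 0$. -/
/-! Since `σ < 1 - w₋ < 1 - w`, one has `(1 - w)² - σ² > (2 - w - w₋)(w₋ - w)` and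
`σ (w₊ - w) < (1 - w)(w₊ - w)`; substituting both bounds leaves a margin of
`(1 - w)(w₋ - w)(2 - w - w₋) > 0`. Positivity of the right-hand side comes from
`2 - w₋ - w₊ = 2 - r > 0`. -/

theorem lt_three_mul_sq_sub_sq_sub_two_mul {w a b σ : ℝ} (hwa : w < a) (hwb : w < b)
    (hσ : 0 < σ) (hσa : σ < 1 - a) :
    2 * (1 - w) * (a - w) * (2 - a - b) <
      3 * (1 - w) * ((1 - w) ^ 2 - σ ^ 2) - 2 * σ * (a - w) * (b - w) := by
  have haw : 0 < a - w := sub_pos.2 hwa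
  have h1w : 0 < 1 - w := by linarith
  have hsq : (a - w) * (2 - w - a) < (1 - w) ^ 2 - σ ^ 2 := by nlinarith
  have hlin : σ * (b - w) < (1 - w) * (b - w) :=
    mul_lt_mul_of_pos_right (by linarith) (sub_pos.2 hwb)
  have hmargin : 0 < (1 - w) * (a - w) * (2 - w - a) :=
    mul_pos (mul_pos h1w haw) (by linarith)
  calc 2 * (1 - w) * (a - w) * (2 - a - b)
      < 3 * (1 - w) * ((a - w) * (2 - w - a)) - 2 * (a - w) * ((1 - w) * (b - w)) := by
        linarith
    _ < 3 * (1 - w) * ((1 - w) ^ 2 - σ ^ 2) - 2 * (a - w) * (σ * (b - w)) := by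
        nlinarith [mul_lt_mul_of_pos_left hsq (by linarith : (0 : ℝ) < 3 * (1 - w)),
          mul_lt_mul_of_pos_left hlin (by linarith : (0 : ℝ) < 2 * (a - w))]
    _ = 3 * (1 - w) * ((1 - w) ^ 2 - σ ^ 2) - 2 * σ * (a - w) * (b - w) := by ring

theorem stmt_18_general (r w σ : ℝ) (h2 : r < 3 - Real.sqrt 3)
    (wm wp : ℝ)
    (hwm : wm = (r - Real.sqrt (r ^ 2 - 6 * r + 6)) / 2)
    (hwp : wp = (r + Real.sqrt (r ^ 2 - 6 * r + 6)) / 2)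
    (hw' : w < wm) (hσ : 0 < σ) (hσ' : σ < 1 - wm) :
    3 * (1 - w) * ((1 - w) ^ 2 - σ ^ 2) - 2 * σ * (wm - w) * (wp - w) >
      2 * (1 - w) * (wm - w) * (2 - wm - wp) ∧
    2 * (1 - w) * (wm - w) * (2 - wm - wp) > 0 := by
  have hsqrt3 : 1 < Real.sqrt 3 := (Real.lt_sqrt zero_le_one).2 (by norm_num)
  have hwm_le_wp : wm ≤ wp := by
    rw [hwm, hwp]; linarith [Real.sqrt_nonneg (r ^ 2 - 6 * r + 6)]
  have hsum : wm + wp = r := by rw [hwm, hwp]; ring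
  refine ⟨lt_three_mul_sq_sub_sq_sub_two_mul hw' (hw'.trans_le hwm_le_wp) hσ hσ', ?_⟩
  have h1w : 0 < 1 - w := by linarith
  exact mul_pos (mul_pos (mul_pos two_pos h1w) (sub_pos.2 hw')) (by linarith)

theorem stmt_18 (r w σ : ℝ) (h1 : 1 < r) (h2 : r < 3 - Real.sqrt 3)
    (wm wp : ℝ)
    (hwm : wm = (r - Real.sqrt (r ^ 2 - 6 * r + 6)) / 2)
    (hwp : wp = (r + Real.sqrt (r ^ 2 - 6 * r + 6)) / 2)
    (hw : 0 < w) (hw' : w < wm) (hσ : 0 < σ) (hσ' : σ < 1 - wm) :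
    3 * (1 - w) * ((1 - w) ^ 2 - σ ^ 2) - 2 * σ * (wm - w) * (wp - w) >
      2 * (1 - w) * (wm - w) * (2 - wm - wp) ∧
    2 * (1 - w) * (wm - w) * (2 - wm - wp) > 0 :=
  stmt_18_general r w σ h2 wm wp hwm hwp hw' hσ hσ'
end
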